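/- arXiv:1803.06836 — 4 statements merged into one kernel-verified Lean document; each statement's English description precedes it below -/
import Mathlib

section
/- Let A be a bounded self-adjoint operator on a complex Hilbert space H and Γ a conjugation with Γ A Γ = −A. Then A₊ := (A + √(A²))/2 satisfies the three Sorkin conditions: (SJ1) A₊ − Γ A₊ Γ = A; (SJ2) A₊ · (Γ A₊ Γ) = 0; (SJ3) A₊ ≥ 0. -/
open scoped ComplexOrder

local notation "⟪" x ", " y "⟫" => @inner ℂ _ _ x y

set_option maxHeartbeats 1000000 in
set_option synthInstance.maxHeartbeats 400000 in
/-- Sorkin's three conditions for the SJ positive part: with `Γ` a conjugation,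
`A` bounded self-adjoint satisfying `Γ A Γ = -A`, and `R = √(A²)` the positive
square root of `A²`, the operator `A₊ = (A + R)/2` satisfies
(SJ1) `A₊ - Γ A₊ Γ = A`, (SJ2) `A₊ (Γ A₊ Γ) = 0`, (SJ3) `A₊ ≥ 0`. -/
theorem sorkin_conditions {H : Type*} [NormedAddCommGroup H] [InnerProductSpace ℂ H]
    [CompleteSpace H] (Γ : H → H)
    (hΓadd : ∀ x y : H, Γ (x + y) = Γ x + Γ y)
    (hΓsmul : ∀ (c : ℂ) (x : H), Γ (c • x) = (starRingEnd ℂ) c • Γ x)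
    (hΓinv : ∀ x : H, Γ (Γ x) = x)
    (hΓip : ∀ x y : H, ⟪Γ x, Γ y⟫ = ⟪y, x⟫)
    (A R : H →L[ℂ] H)
    (hA : IsSelfAdjoint A)
    (hΓA : ∀ x : H, Γ (A (Γ x)) = -(A x))
    (hR : IsSelfAdjoint R) (hRpos : ∀ ψ : H, 0 ≤ ⟪ψ, R ψ⟫)
    (hsq : R * R = A * A) :
    (∀ x : H, ((1/2 : ℂ) • (A + R)) x - Γ (((1/2 : ℂ) • (A + R)) (Γ x)) = A x) ∧
    (∀ x : H, ((1/2 : ℂ) • (A + R)) (Γ (((1/2 : ℂ) • (A + R)) (Γ x))) = 0) ∧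
    (∀ ψ : H, 0 ≤ ⟪ψ, ((1/2 : ℂ) • (A + R)) ψ⟫) := by
  have hnorm : ∀ x : H, ‖Γ x‖ = ‖x‖ := by
    intro x
    have h := hΓip x x
    rw [norm_eq_sqrt_re_inner (𝕜 := ℂ) (Γ x), norm_eq_sqrt_re_inner (𝕜 := ℂ) x, h]
  -- the conjugated operator G = Γ R Γ
  set Gl : H →ₗ[ℂ] H :=
    { toFun := fun x => Γ (R (Γ x))
      map_add' := fun x y => by
        show Γ (R (Γ (x + y))) = Γ (R (Γ x)) + Γ (R (Γ y))
        rw [hΓadd, map_add, hΓadd]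
      map_smul' := fun c x => by
        show Γ (R (Γ (c • x))) = c • Γ (R (Γ x))
        rw [hΓsmul, map_smul, hΓsmul]; simp } with hGl
  set G : H →L[ℂ] H := Gl.mkContinuous ‖R‖ (fun x => by
    show ‖Γ (R (Γ x))‖ ≤ ‖R‖ * ‖x‖
    rw [hnorm]
    calc ‖R (Γ x)‖ ≤ ‖R‖ * ‖Γ x‖ := R.le_opNorm _
    _ = ‖R‖ * ‖x‖ := by rw [hnorm]) with hGdef
  have hGapp : ∀ x : H, G x = Γ (R (Γ x)) := fun x => rfl
  -- G is self-adjoint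
  have hGsa : IsSelfAdjoint G := by
    rw [ContinuousLinearMap.isSelfAdjoint_iff_isSymmetric]
    intro x y
    have hR' := ContinuousLinearMap.isSelfAdjoint_iff_isSymmetric.mp hR
    calc ⟪G x, y⟫ = ⟪Γ (R (Γ x)), Γ (Γ y)⟫ := by rw [hΓinv, hGapp]
    _ = ⟪Γ y, R (Γ x)⟫ := hΓip _ _
    _ = ⟪R (Γ y), Γ x⟫ := (hR' _ _).symm
    _ = ⟪Γ (Γ (R (Γ y))), Γ x⟫ := by rw [hΓinv]
    _ = ⟪x, Γ (R (Γ y))⟫ := hΓip _ _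
    _ = ⟪x, G y⟫ := by rw [hGapp]
  -- positivity transfer: ℂ-order statements
  have hpos_iff : ∀ (T : H →L[ℂ] H), (0 : H →L[ℂ] H) ≤ T ↔ ∀ ψ, 0 ≤ ⟪ψ, T ψ⟫ := by
    intro T
    rw [ContinuousLinearMap.nonneg_iff_isPositive, ContinuousLinearMap.isPositive_iff_complex]
    constructor
    · intro h ψ
      obtain ⟨h1, h2⟩ := h ψ
      have hz : ⟪ψ, T ψ⟫ = ((RCLike.re ⟪T ψ, ψ⟫ : ℝ) : ℂ) := by
        rw [← inner_conj_symm, ← h1]; simp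
      rw [hz]
      exact Complex.zero_le_real.mpr h2
    · intro h ψ
      obtain ⟨h1, h2⟩ := Complex.le_def.mp (h ψ)
      have him : (⟪ψ, T ψ⟫).im = 0 := by simpa using h2.symm
      have hc : ⟪T ψ, ψ⟫ = (starRingEnd ℂ) ⟪ψ, T ψ⟫ := (inner_conj_symm _ _).symm
      have him2 : (⟪T ψ, ψ⟫).im = 0 := by rw [hc, Complex.conj_im, him, neg_zero]
      have hre2 : (⟪T ψ, ψ⟫).re = (⟪ψ, T ψ⟫).re := by rw [hc, Complex.conj_re]
      constructor
      · apply Complex.ext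
        · simp [RCLike.re_to_complex]
        · simp [RCLike.re_to_complex, him2]
      · simpa [RCLike.re_to_complex, hre2] using h1
  have hRnn : (0 : H →L[ℂ] H) ≤ R := (hpos_iff R).mpr hRpos
  have hGnn : (0 : H →L[ℂ] H) ≤ G := by
    rw [hpos_iff]
    intro ψ
    have : ⟪ψ, G ψ⟫ = ⟪Γ ψ, R (Γ ψ)⟫ := by
      rw [hGapp]
      calc ⟪ψ, Γ (R (Γ ψ))⟫ = ⟪Γ (Γ ψ), Γ (R (Γ ψ))⟫ := by rw [hΓinv]
      _ = ⟪R (Γ ψ), Γ ψ⟫ := hΓip _ _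
      _ = (starRingEnd ℂ) ⟪Γ ψ, R (Γ ψ)⟫ := (inner_conj_symm _ _).symm
      _ = ⟪Γ ψ, R (Γ ψ)⟫ := by
          have := (Complex.le_def.mp (hRpos (Γ ψ))).2
          exact Complex.conj_eq_iff_im.mpr (by simpa using this.symm)
    rw [this]; exact hRpos _
  -- G * G = A * A
  have hGsq : G * G = A * A := by
    ext x
    show G (G x) = A (A x)
    rw [hGapp, hGapp, hΓinv]
    have h1 : R (R (Γ x)) = A (A (Γ x)) := congrFun (congrArg DFunLike.coe hsq) (Γ x)
    rw [h1]
    calc Γ (A (A (Γ x))) = Γ (A (Γ (Γ (A (Γ x))))) := by rw [hΓinv]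
    _ = -(A (Γ (A (Γ x)))) := hΓA _
    _ = -(A (-(A x))) := by rw [hΓA]
    _ = A (A x) := by rw [map_neg, neg_neg]
  -- R = cfc |x| A
  have hAbs : R = cfc (fun x : ℝ => |x|) A := by
    have habs_sq : cfc (fun x : ℝ => |x|) A * cfc (fun x : ℝ => |x|) A = A * A := by
      rw [← cfc_mul _ _ A (by fun_prop) (by fun_prop)]
      conv_rhs => rw [← cfc_id ℝ A, ← cfc_mul _ _ A (by fun_prop) (by fun_prop)]
      exact cfc_congr fun x _ => by simp [abs_mul_abs_self]
    have h1 : CFC.sqrt (A * A) = R := CFC.sqrt_unique hsq hRnn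
    have h2 : CFC.sqrt (A * A) = cfc (fun x : ℝ => |x|) A :=
      CFC.sqrt_unique habs_sq (cfc_nonneg fun x _ => abs_nonneg x)
    rw [← h1, h2]
  -- G = R
  have hGR : G = R := by
    have h1 : CFC.sqrt (A * A) = R := CFC.sqrt_unique hsq hRnn
    have h2 : CFC.sqrt (A * A) = G := CFC.sqrt_unique hGsq hGnn
    rw [← h1, h2]
  have hGRx : ∀ x : H, Γ (R (Γ x)) = R x := fun x => by
    rw [← hGapp, hGR]
  -- A commutes with R
  have hcomm : A * R = R * A := by
    have h := cfc_commute_cfc (id : ℝ → ℝ) (fun x : ℝ => |x|) A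
    rw [cfc_id ℝ A] at h
    rw [hAbs]
    exact h
  -- positivity of A + R
  have hARnn : (0 : H →L[ℂ] H) ≤ A + R := by
    have h0 : (0 : H →L[ℂ] H) ≤ cfc (fun x : ℝ => x + |x|) A :=
      cfc_nonneg fun x _ => by have := neg_abs_le x; linarith
    rwa [cfc_add A (fun x : ℝ => x) (fun x : ℝ => |x|) (by fun_prop) (by fun_prop),
      cfc_id' ℝ A, ← hAbs] at h0
  refine ⟨?_, ?_, ?_⟩
  · intro x
    have hexp : Γ (((1/2 : ℂ) • (A + R)) (Γ x)) = (1/2 : ℂ) • (-(A x) + R x) := by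
      show Γ ((1/2 : ℂ) • (A (Γ x) + R (Γ x))) = _
      rw [hΓsmul, hΓadd, hΓA, hGRx,
        show (starRingEnd ℂ) (1/2 : ℂ) = (1/2 : ℂ) by apply Complex.ext <;> simp]
    rw [hexp]
    show (1/2 : ℂ) • (A x + R x) - (1/2 : ℂ) • (-(A x) + R x) = A x
    rw [← smul_sub]
    have : A x + R x - (-(A x) + R x) = (2 : ℂ) • A x := by
      rw [two_smul]; abel
    rw [this, smul_smul]
    norm_num
  · intro x
    have hexp : Γ (((1/2 : ℂ) • (A + R)) (Γ x)) = (1/2 : ℂ) • (-(A x) + R x) := by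
      show Γ ((1/2 : ℂ) • (A (Γ x) + R (Γ x))) = _
      rw [hΓsmul, hΓadd, hΓA, hGRx,
        show (starRingEnd ℂ) (1/2 : ℂ) = (1/2 : ℂ) by apply Complex.ext <;> simp]
    rw [hexp]
    show (1/2 : ℂ) • ((A + R) ((1/2 : ℂ) • (-(A x) + R x))) = 0
    rw [map_smul, smul_smul]
    have key : (A + R) (-(A x) + R x) = 0 := by
      have : (A + R) * (R - A) = 0 := by
        rw [add_mul, mul_sub, mul_sub, hcomm, hsq]
        abel
      have h0 : ((A + R) * (R - A)) x = (0 : H →L[ℂ] H) x := by rw [this]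
      simpa [ContinuousLinearMap.mul_apply, sub_eq_neg_add] using h0
    rw [key, smul_zero]
  · intro ψ
    have h := (hpos_iff (A + R)).mp hARnn ψ
    show 0 ≤ ⟪ψ, (1/2 : ℂ) • ((A + R) ψ)⟫
    rw [inner_smul_right]
    have : (0:ℂ) ≤ (1/2 : ℂ) := by rw [Complex.le_def]; norm_num
    exact mul_nonneg this h
end

section
/- Let A be a bounded self-adjoint operator on a complex Hilbert space H with conjugation Γ satisfying Γ A Γ = −A, and let A₊ = (A + √(A²))/2. Define W(f, g) = ⟨Γ f, A₊ g⟩. Then: (i) W(conj f, f) ≥ 0 for all f (writing conj f = Γ f); (ii) conj(W(f,g)) = W(Γg, Γf); (iii) W(f,g) − W(g,f) = ⟨Γ f, A g⟩ (the commutator/CCR property). -/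
open scoped ComplexOrder

local notation "⟪" x ", " y "⟫" => @inner ℂ _ _ x y

set_option maxHeartbeats 1000000
set_option synthInstance.maxHeartbeats 400000

/-- Properties of the SJ two-point function `W(f,g) = ⟪Γf, A₊ g⟫`, where `Γ` is a
conjugation, `A` is bounded self-adjoint with `Γ A Γ = -A`, `R = √(A²)` is the
positive square root of `A²`, and `A₊ = (A + R)/2`:
(i) positivity `W(Γf, f) ≥ 0`; (ii) hermiticity `conj W(f,g) = W(Γg, Γf)`;
(iii) the commutator property `W(f,g) - W(g,f) = ⟪Γf, A g⟫`. -/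
theorem sj_two_point_function_properties {H : Type*} [NormedAddCommGroup H]
    [InnerProductSpace ℂ H] [CompleteSpace H]
    (Γ : H → H)
    (hΓadd : ∀ x y : H, Γ (x + y) = Γ x + Γ y)
    (hΓsmul : ∀ (c : ℂ) (x : H), Γ (c • x) = (starRingEnd ℂ) c • Γ x)
    (hΓinv : ∀ x : H, Γ (Γ x) = x)
    (hΓip : ∀ x y : H, ⟪Γ x, Γ y⟫ = ⟪y, x⟫)
    (A R : H →L[ℂ] H)
    (hA : IsSelfAdjoint A)
    (hΓA : ∀ x : H, Γ (A (Γ x)) = -(A x))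
    (hR : IsSelfAdjoint R) (hRpos : ∀ ψ : H, 0 ≤ ⟪ψ, R ψ⟫)
    (hsq : R * R = A * A) :
    (∀ f : H, 0 ≤ ⟪Γ (Γ f), ((1/2 : ℂ) • (A + R)) f⟫) ∧
    (∀ f g : H, (starRingEnd ℂ) ⟪Γ f, ((1/2 : ℂ) • (A + R)) g⟫ =
      ⟪Γ (Γ g), ((1/2 : ℂ) • (A + R)) (Γ f)⟫) ∧
    (∀ f g : H, ⟪Γ f, ((1/2 : ℂ) • (A + R)) g⟫ - ⟪Γ g, ((1/2 : ℂ) • (A + R)) f⟫ =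
      ⟪Γ f, A g⟫) := by
  -- Γ preserves norms
  have hΓnorm : ∀ x : H, ‖Γ x‖ = ‖x‖ := by
    intro x
    have h := hΓip x x
    rw [inner_self_eq_norm_sq_to_K, inner_self_eq_norm_sq_to_K] at h
    have h' : ‖Γ x‖ ^ 2 = ‖x‖ ^ 2 := by exact_mod_cast h
    nlinarith [norm_nonneg (Γ x), norm_nonneg x]
  -- symmetry of A and R
  have hAsym : ∀ x y : H, ⟪A x, y⟫ = ⟪x, A y⟫ := fun x y =>
    (ContinuousLinearMap.isSelfAdjoint_iff_isSymmetric.mp hA) x y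
  have hRsym : ∀ x y : H, ⟪R x, y⟫ = ⟪x, R y⟫ := fun x y =>
    (ContinuousLinearMap.isSelfAdjoint_iff_isSymmetric.mp hR) x y
  -- Γ anticommutes with A
  have hΓA' : ∀ x : H, Γ (A x) = -(A (Γ x)) := by
    intro x
    have := hΓA (Γ x)
    rwa [hΓinv] at this
  -- the conjugated operator S = Γ R Γ
  let Slin : H →ₗ[ℂ] H :=
    { toFun := fun x => Γ (R (Γ x))
      map_add' := fun x y => by
        show Γ (R (Γ (x + y))) = Γ (R (Γ x)) + Γ (R (Γ y))
        rw [hΓadd, map_add, hΓadd]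
      map_smul' := fun c x => by
        show Γ (R (Γ (c • x))) = c • Γ (R (Γ x))
        simp only [hΓsmul, map_smul, Complex.conj_conj] }
  have hSbound : ∀ x : H, ‖Slin x‖ ≤ ‖R‖ * ‖x‖ := by
    intro x
    show ‖Γ (R (Γ x))‖ ≤ ‖R‖ * ‖x‖
    rw [hΓnorm]
    calc ‖R (Γ x)‖ ≤ ‖R‖ * ‖Γ x‖ := R.le_opNorm _
    _ = ‖R‖ * ‖x‖ := by rw [hΓnorm]
  let S : H →L[ℂ] H := Slin.mkContinuous ‖R‖ hSbound
  have hSapp : ∀ x : H, S x = Γ (R (Γ x)) := fun x => rfl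
  -- S is self-adjoint
  have hSsym : (S : H →ₗ[ℂ] H).IsSymmetric := by
    intro x y
    show ⟪Γ (R (Γ x)), y⟫ = ⟪x, Γ (R (Γ y))⟫
    calc ⟪Γ (R (Γ x)), y⟫ = ⟪Γ (R (Γ x)), Γ (Γ y)⟫ := by rw [hΓinv]
    _ = ⟪Γ y, R (Γ x)⟫ := hΓip _ _
    _ = ⟪R (Γ y), Γ x⟫ := (hRsym _ _).symm
    _ = ⟪Γ (Γ x), Γ (R (Γ y))⟫ := (hΓip _ _).symm
    _ = ⟪x, Γ (R (Γ y))⟫ := by rw [hΓinv]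
  have hSsa : IsSelfAdjoint S := ContinuousLinearMap.isSelfAdjoint_iff_isSymmetric.mpr hSsym
  -- positivity of R and S in the Loewner order
  have hRnn : (0 : H →L[ℂ] H) ≤ R := by
    rw [ContinuousLinearMap.nonneg_iff_isPositive]
    refine ⟨ContinuousLinearMap.isSelfAdjoint_iff_isSymmetric.mp hR, fun x => ?_⟩
    have h := hRpos x
    rw [Complex.nonneg_iff] at h
    show 0 ≤ RCLike.re ⟪R x, x⟫
    rw [inner_re_symm, RCLike.re_to_complex]
    exact h.1
  have hSnn : (0 : H →L[ℂ] H) ≤ S := by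
    rw [ContinuousLinearMap.nonneg_iff_isPositive]
    refine ⟨ContinuousLinearMap.isSelfAdjoint_iff_isSymmetric.mp hSsa, fun x => ?_⟩
    have key : ⟪S x, x⟫ = ⟪Γ x, R (Γ x)⟫ := by
      calc ⟪S x, x⟫ = ⟪Γ (R (Γ x)), Γ (Γ x)⟫ := by rw [hSapp, hΓinv]
      _ = ⟪Γ x, R (Γ x)⟫ := hΓip _ _
    have h := hRpos (Γ x)
    rw [Complex.nonneg_iff] at h
    show 0 ≤ RCLike.re ⟪S x, x⟫
    rw [RCLike.re_to_complex, key]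
    exact h.1
  -- S² = R²
  have hSsq : S * S = R * R := by
    ext x
    show S (S x) = (R * R) x
    rw [hSapp, hSapp, hΓinv]
    have : R (R (Γ x)) = A (A (Γ x)) := by
      have := congrArg (fun T : H →L[ℂ] H => T (Γ x)) hsq
      simpa using this
    rw [this]
    have h1 : Γ (A (A (Γ x))) = -(A (Γ (A (Γ x)))) := by
      calc Γ (A (A (Γ x))) = Γ (A (Γ (Γ (A (Γ x))))) := by rw [hΓinv]
      _ = -(A (Γ (A (Γ x)))) := hΓA _
    rw [h1, hΓA x, map_neg, neg_neg, hsq]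
    rfl
  -- by uniqueness of positive square roots, S = R
  have hSR : S = R := by
    have h1 : CFC.sqrt (R * R) = S := CFC.sqrt_unique hSsq hSnn
    have h2 : CFC.sqrt (R * R) = R := CFC.sqrt_unique rfl hRnn
    rw [← h1, h2]
  -- hence Γ commutes with R
  have hΓR : ∀ x : H, Γ (R x) = R (Γ x) := by
    intro x
    have := congrArg (fun T : H →L[ℂ] H => T (Γ x)) hSR
    rw [hSapp, hΓinv] at this
    exact this
  -- A + R is positive: A + R = 2 A⁺
  have hARnn : (0 : H →L[ℂ] H) ≤ A + R := by
    have hPnn : (0 : H →L[ℂ] H) ≤ A⁺ := CFC.posPart_nonneg A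
    have hNnn : (0 : H →L[ℂ] H) ≤ A⁻ := CFC.negPart_nonneg A
    have hPN : A⁺ - A⁻ = A := CFC.posPart_sub_negPart A hA
    have h0 : A⁺ * A⁻ = 0 := CFC.posPart_mul_negPart A
    have h0' : A⁻ * A⁺ = 0 := CFC.negPart_mul_posPart A
    have expand1 : (A⁺ + A⁻) * (A⁺ + A⁻) = A⁺ * A⁺ + A⁻ * A⁻ := by
      rw [add_mul, mul_add, mul_add, h0, h0']; abel
    have expand2 : (A⁺ - A⁻) * (A⁺ - A⁻) = A⁺ * A⁺ + A⁻ * A⁻ := by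
      rw [sub_mul, mul_sub, mul_sub, h0, h0']; abel
    have hsum_sq : (A⁺ + A⁻) * (A⁺ + A⁻) = R * R := by
      rw [expand1, ← expand2, hPN, ← hsq]
    have hsumR : A⁺ + A⁻ = R := by
      have h1 : CFC.sqrt (R * R) = A⁺ + A⁻ := CFC.sqrt_unique hsum_sq (add_nonneg hPnn hNnn)
      have h2 : CFC.sqrt (R * R) = R := CFC.sqrt_unique rfl hRnn
      rw [← h1, h2]
    have key : A + R = (A⁺ - A⁻) + (A⁺ + A⁻) := by rw [hPN, hsumR]
    have key2 : A + R = A⁺ + A⁺ := by rw [key]; abel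
    rw [key2]
    exact add_nonneg hPnn hPnn
  -- symmetry of A + R
  have hARsym : ∀ x y : H, ⟪(A + R) x, y⟫ = ⟪x, (A + R) y⟫ := by
    intro x y
    simp only [ContinuousLinearMap.add_apply, inner_add_left, inner_add_right]
    rw [hAsym x y, hRsym x y]
  -- inner-product positivity of A + R
  have hARpos : ∀ f : H, 0 ≤ ⟪f, (A + R) f⟫ := by
    intro f
    have hpos : (A + R).IsPositive := (ContinuousLinearMap.nonneg_iff_isPositive _).mp hARnn
    have h1 := hpos.inner_nonneg_right f
    have hst : (starRingEnd ℂ) ⟪f, (A + R) f⟫ = ⟪f, (A + R) f⟫ := by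
      rw [inner_conj_symm]
      exact hARsym f f
    have him : (⟪f, (A + R) f⟫).im = 0 := by
      have := congrArg Complex.im hst
      simp only [Complex.conj_im] at this
      linarith
    rw [Complex.nonneg_iff]
    exact ⟨(Complex.nonneg_iff.mp h1).1, him.symm⟩
  refine ⟨?_, ?_, ?_⟩
  · -- (i) positivity
    intro f
    rw [hΓinv]
    have happ : ((1/2 : ℂ) • (A + R)) f = (1/2 : ℂ) • ((A + R) f) := rfl
    rw [happ, inner_smul_right]
    refine mul_nonneg ?_ (hARpos f)
    rw [Complex.nonneg_iff]
    norm_num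
  · -- (ii) hermiticity
    intro f g
    rw [hΓinv]
    have hTsym : ∀ x y : H, ⟪((1/2 : ℂ) • (A + R)) x, y⟫ = ⟪x, ((1/2 : ℂ) • (A + R)) y⟫ := by
      intro x y
      rw [ContinuousLinearMap.smul_apply, ContinuousLinearMap.smul_apply, inner_smul_left,
        inner_smul_right, hARsym x y]
      congr 1
      rw [map_div₀, map_one, map_ofNat]
    rw [← hTsym g (Γ f)]
    exact inner_conj_symm _ _
  · -- (iii) commutator
    intro f g
    have e1 : ⟪Γ g, A f⟫ = -⟪Γ f, A g⟫ := by
      calc ⟪Γ g, A f⟫ = ⟪Γ g, Γ (Γ (A f))⟫ := by rw [hΓinv]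
      _ = ⟪Γ (A f), g⟫ := hΓip _ _
      _ = ⟪-(A (Γ f)), g⟫ := by rw [hΓA']
      _ = -⟪A (Γ f), g⟫ := by rw [inner_neg_left]
      _ = -⟪Γ f, A g⟫ := by rw [hAsym]
    have e2 : ⟪Γ g, R f⟫ = ⟪Γ f, R g⟫ := by
      calc ⟪Γ g, R f⟫ = ⟪Γ g, Γ (Γ (R f))⟫ := by rw [hΓinv]
      _ = ⟪Γ (R f), g⟫ := hΓip _ _
      _ = ⟪R (Γ f), g⟫ := by rw [hΓR]
      _ = ⟪Γ f, R g⟫ := hRsym _ _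
    simp only [ContinuousLinearMap.smul_apply, ContinuousLinearMap.add_apply,
      inner_smul_right, inner_add_right, e1, e2]
    ring
end

section
/- Let (ω_j) be positive reals with ω_j → ∞, (β_j) complex with α_j = √(1+|β_j|²), and f : ℝ → ℂ smooth compactly supported. If for every N ∈ ℕ, ω_j^N β_j → 0 as j → ∞, then for every N ∈ ℕ, ζ^N · ∑_j (1/(2ω_j)) |α_j f̂(ω_j + ζ) + conj(β_j) f̂(ζ − ω_j)|² → 0 as ζ → +∞, provided the sum ∑_j (1/(2ω_j)) · (sup-type bounds) is controlled by polynomial Weyl-law growth: assume additionally that #{j : ω_j ≤ R} ≤ C·R^d for some constants C, d. -/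
open Filter MeasureTheory

open scoped Real

private lemma aux_pow_bound (a : ℝ) (ha : 0 ≤ a) (M : ℕ) :
    (1 + a) ^ M ≤ 2 ^ M * (1 + a ^ M) := by
  rcases le_total a 1 with h | h
  · calc (1 + a) ^ M ≤ 2 ^ M := pow_le_pow_left₀ (by linarith) (by linarith) M
      _ ≤ 2 ^ M * (1 + a ^ M) :=
          le_mul_of_one_le_right (by positivity) (by nlinarith [pow_nonneg ha M])
  · calc (1 + a) ^ M ≤ (2 * a) ^ M := pow_le_pow_left₀ (by linarith) (by linarith) M
      _ = 2 ^ M * a ^ M := mul_pow 2 a M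
      _ ≤ 2 ^ M * (1 + a ^ M) := by
          have : (0:ℝ) < 2 ^ M := by positivity
          nlinarith [pow_nonneg ha M]

private lemma fourier_decay (f : ℝ → ℂ) (hf : ContDiff ℝ (⊤ : ℕ∞) f) (hsupp : HasCompactSupport f)
    (M : ℕ) :
    ∃ D : ℝ, 0 < D ∧ ∀ k : ℝ,
      ‖(∫ x : ℝ, f x * Complex.exp (Complex.I * (k : ℂ) * (x : ℂ)))‖
        ≤ D / (1 + |k|) ^ M := by
  have hdecay : ∀ (k n : ℕ), ∃ C, ∀ x : ℝ, ‖x‖ ^ k * ‖iteratedFDeriv ℝ n f x‖ ≤ C := by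
    intro k n
    have hc : Continuous fun x : ℝ => ‖x‖ ^ k * ‖iteratedFDeriv ℝ n f x‖ :=
      (continuous_norm.pow k).mul (hf.continuous_iteratedFDeriv (by exact (by exact_mod_cast le_top))).norm
    have hcs : HasCompactSupport fun x : ℝ => ‖x‖ ^ k * ‖iteratedFDeriv ℝ n f x‖ :=
      ((hsupp.iteratedFDeriv n).norm).mul_left
    obtain ⟨c, hC⟩ := hcs.exists_bound_of_continuous hc
    refine ⟨c, fun x => ?_⟩
    calc ‖x‖ ^ k * ‖iteratedFDeriv ℝ n f x‖
        ≤ ‖‖x‖ ^ k * ‖iteratedFDeriv ℝ n f x‖‖ := le_abs_self _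
      _ ≤ c := hC x
  set F : SchwartzMap ℝ ℂ := ⟨f, hf.of_le (by simp), hdecay⟩ with hF
  set g := SchwartzMap.fourierTransformCLM ℝ F with hg
  obtain ⟨C0, hC0pos, hC0⟩ := g.decay 0 0
  obtain ⟨CM, hCMpos, hCM⟩ := g.decay M 0
  refine ⟨14 ^ M * (C0 + CM), by positivity, fun k => ?_⟩
  have h2pi : (0:ℝ) < 2 * π := by positivity
  set w : ℝ := -(k / (2 * π)) with hw
  have hid : (∫ x : ℝ, f x * Complex.exp (Complex.I * (k : ℂ) * (x : ℂ))) = g w := by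
    have hgw : g w = FourierTransform.fourier f w := by
      rw [hg]; rfl
    rw [hgw, Real.fourier_real_eq_integral_exp_smul]
    refine integral_congr_ae (Eventually.of_forall fun x => ?_)
    have harg : ((-2 * π * x * w : ℝ) : ℂ) = (x : ℂ) * k := by
      have h : (-2 * π * x * w : ℝ) = x * k := by
        rw [hw]; field_simp
      rw [h]; push_cast; ring
    dsimp only
    rw [smul_eq_mul, harg, mul_comm (Complex.exp _) (f x)]
    congr 1
    ring
  have hwabs : |k| ≤ 7 * |w| := by
    have hwk : |w| = |k| / (2 * π) := by
      rw [hw, abs_neg, abs_div, abs_of_pos h2pi]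
    rw [hwk, mul_div_assoc', le_div_iff₀ h2pi]
    nlinarith [abs_nonneg k, Real.pi_lt_d2]
  have hb0 : ‖g w‖ ≤ C0 := by simpa [norm_iteratedFDeriv_zero] using hC0 w
  have hbM : ‖w‖ ^ M * ‖g w‖ ≤ CM := by simpa [norm_iteratedFDeriv_zero] using hCM w
  rw [hid, le_div_iff₀ (by positivity : (0:ℝ) < (1 + |k|) ^ M)]
  have h1 : (1 + |k|) ^ M ≤ 14 ^ M * (1 + ‖w‖ ^ M) := by
    calc (1 + |k|) ^ M ≤ (7 * (1 + ‖w‖)) ^ M := by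
          apply pow_le_pow_left₀ (by positivity)
          have hnw : |w| = ‖w‖ := rfl
          nlinarith [norm_nonneg w, hwabs]
      _ = 7 ^ M * (1 + ‖w‖) ^ M := mul_pow 7 _ M
      _ ≤ 7 ^ M * (2 ^ M * (1 + ‖w‖ ^ M)) :=
          mul_le_mul_of_nonneg_left (aux_pow_bound ‖w‖ (norm_nonneg w) M) (by positivity)
      _ = 14 ^ M * (1 + ‖w‖ ^ M) := by
          rw [← mul_assoc, ← mul_pow]; norm_num
  calc ‖g w‖ * (1 + |k|) ^ M ≤ ‖g w‖ * (14 ^ M * (1 + ‖w‖ ^ M)) :=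
        mul_le_mul_of_nonneg_left h1 (norm_nonneg _)
    _ = 14 ^ M * (‖g w‖ + ‖w‖ ^ M * ‖g w‖) := by ring
    _ ≤ 14 ^ M * (C0 + CM) :=
        mul_le_mul_of_nonneg_left (add_le_add hb0 hbM) (by positivity)

private lemma summable_aux (ω : ℕ → ℝ) (C d : ℝ) (hωpos : ∀ j, 0 < ω j)
    (hωt : Tendsto ω atTop atTop)
    (hcount : ∀ R : ℝ, 1 ≤ R → (Nat.card {j : ℕ // ω j ≤ R} : ℝ) ≤ C * R ^ d)
    (M : ℕ) (hM : d + 2 ≤ (M : ℝ)) :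
    Summable fun j : ℕ => (1 / (1 + ω j)) ^ M := by
  classical
  have hC : 0 ≤ C := by
    have h := hcount 1 le_rfl
    have h0 : (0:ℝ) ≤ (Nat.card {j : ℕ // ω j ≤ (1:ℝ)} : ℝ) := Nat.cast_nonneg _
    rw [Real.one_rpow, mul_one] at h
    linarith
  have hsum : Summable fun n : ℕ => ((n : ℝ) + 1) ^ (d - M) := by
    have hbase : Summable fun n : ℕ => ((n : ℝ)) ^ (d - M) :=
      Real.summable_nat_rpow.mpr (by linarith)
    have := (summable_nat_add_iff 1).mpr hbase
    refine this.congr fun n => ?_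
    push_cast
    ring_nf
  set T := ∑' n : ℕ, ((n : ℝ) + 1) ^ (d - M) with hT
  apply summable_of_sum_le (c := C * T)
    (fun j => pow_nonneg (one_div_nonneg.mpr (by linarith [hωpos j])) M)
  intro u
  set nf : ℕ → ℕ := fun j => ⌊ω j⌋₊ with hnf
  have hmaps : ∀ j ∈ u, nf j ∈ u.image nf := fun j hj => Finset.mem_image_of_mem nf hj
  rw [← Finset.sum_fiberwise_of_maps_to hmaps]
  have hfiber : ∀ n ∈ u.image nf,
      (∑ j ∈ u.filter (fun j => nf j = n), (1 / (1 + ω j)) ^ M) ≤ C * ((n : ℝ) + 1) ^ (d - M) := by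
    intro n _
    have hterm : ∀ j ∈ u.filter (fun j => nf j = n),
        (1 / (1 + ω j)) ^ M ≤ (1 / ((n : ℝ) + 1)) ^ M := by
      intro j hj
      have hj' : nf j = n := (Finset.mem_filter.mp hj).2
      have hfl : (n : ℝ) ≤ ω j := by
        rw [← hj']
        exact Nat.floor_le (hωpos j).le
      apply pow_le_pow_left₀ (one_div_nonneg.mpr (by linarith [hωpos j]))
      apply one_div_le_one_div_of_le (by positivity)
      linarith
    have hfin : {j : ℕ | ω j ≤ (n : ℝ) + 1}.Finite := by
      obtain ⟨J, hJ⟩ := eventually_atTop.mp (hωt.eventually (eventually_gt_atTop ((n : ℝ) + 1)))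
      apply Set.Finite.subset (Set.finite_Iio J)
      intro j hj
      by_contra h
      exact absurd hj (not_le.mpr (hJ j (le_of_not_gt h)))
    have hsub : u.filter (fun j => nf j = n) ⊆ hfin.toFinset := by
      intro j hj
      rw [Set.Finite.mem_toFinset]
      have hj' : nf j = n := (Finset.mem_filter.mp hj).2
      have hlt := Nat.lt_floor_add_one (ω j)
      show ω j ≤ (n : ℝ) + 1
      rw [← hj']
      exact_mod_cast hlt.le
    have hcard : ((u.filter (fun j => nf j = n)).card : ℝ) ≤ C * ((n : ℝ) + 1) ^ d := by
      have h1 : (u.filter (fun j => nf j = n)).card ≤ hfin.toFinset.card :=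
        Finset.card_le_card hsub
      have h2 : (hfin.toFinset.card : ℝ) ≤ C * ((n : ℝ) + 1) ^ d := by
        have hc := hcount ((n : ℝ) + 1) (by linarith [Nat.cast_nonneg (α := ℝ) n])
        have heq : (Nat.card {j : ℕ // ω j ≤ (n : ℝ) + 1}) = hfin.toFinset.card := by
          rw [show Nat.card {j : ℕ // ω j ≤ (n : ℝ) + 1}
              = Nat.card ↥{j : ℕ | ω j ≤ (n : ℝ) + 1} from rfl,
            Nat.card_coe_set_eq, Set.ncard_eq_toFinset_card _ hfin]
        rwa [heq] at hc
      exact le_trans (by exact_mod_cast h1) h2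
    calc (∑ j ∈ u.filter (fun j => nf j = n), (1 / (1 + ω j)) ^ M)
        ≤ ∑ _j ∈ u.filter (fun j => nf j = n), (1 / ((n : ℝ) + 1)) ^ M :=
          Finset.sum_le_sum hterm
      _ = ((u.filter (fun j => nf j = n)).card : ℝ) * (1 / ((n : ℝ) + 1)) ^ M := by
          rw [Finset.sum_const, nsmul_eq_mul]
      _ ≤ (C * ((n : ℝ) + 1) ^ d) * (1 / ((n : ℝ) + 1)) ^ M :=
          mul_le_mul_of_nonneg_right hcard (by positivity)
      _ = C * (((n : ℝ) + 1) ^ d * (((n : ℝ) + 1) ^ ((M : ℕ) : ℝ))⁻¹) := by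
          rw [div_pow, one_pow, one_div, Real.rpow_natCast]
          ring
      _ = C * ((n : ℝ) + 1) ^ (d - M) := by
          rw [← Real.rpow_neg (by positivity), ← Real.rpow_add (by positivity)]
          norm_num [sub_eq_add_neg]
  calc (∑ n ∈ u.image nf, ∑ j ∈ u.filter (fun j => nf j = n), (1 / (1 + ω j)) ^ M)
      ≤ ∑ n ∈ u.image nf, C * ((n : ℝ) + 1) ^ (d - M) := Finset.sum_le_sum hfiber
    _ = C * ∑ n ∈ u.image nf, ((n : ℝ) + 1) ^ (d - M) := by rw [← Finset.mul_sum]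
    _ ≤ C * T := by
        apply mul_le_mul_of_nonneg_left _ hC
        exact Summable.sum_le_tsum _ (fun n _ => by positivity) hsum

private lemma exists_bound (g : ℕ → ℝ) (hg : Tendsto g atTop (nhds 0)) :
    ∃ B : ℝ, 0 ≤ B ∧ ∀ j, g j ≤ B := by
  obtain ⟨B, hB⟩ := hg.bddAbove_range
  exact ⟨max B 0, le_max_right _ _, fun j =>
    le_trans (hB (Set.mem_range_self j)) (le_max_left _ _)⟩

private lemma exists_pos_lb (ω : ℕ → ℝ) (hωpos : ∀ j, 0 < ω j)
    (hωt : Tendsto ω atTop atTop) : ∃ m : ℝ, 0 < m ∧ ∀ j, m ≤ ω j := by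
  classical
  obtain ⟨J, hJ⟩ := eventually_atTop.mp (hωt.eventually (eventually_ge_atTop 1))
  have hne : (insert (1:ℝ) ((Finset.range J).image ω)).Nonempty :=
    ⟨1, Finset.mem_insert_self _ _⟩
  refine ⟨(insert (1:ℝ) ((Finset.range J).image ω)).min' hne, ?_, ?_⟩
  · rcases Finset.mem_insert.mp
        ((insert (1:ℝ) ((Finset.range J).image ω)).min'_mem hne) with h | h
    · linarith [h]
    · obtain ⟨j, _, hj⟩ := Finset.mem_image.mp h
      linarith [hωpos j, hj]
  · intro j
    rcases lt_or_ge j J with h | h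
    · exact Finset.min'_le _ _ (Finset.mem_insert_of_mem
        (Finset.mem_image_of_mem ω (Finset.mem_range.mpr h)))
    · exact le_trans (Finset.min'_le _ 1 (Finset.mem_insert_self _ _)) (hJ j h)

set_option maxHeartbeats 2000000 in
/-- The key microlocal estimate. -/
theorem microlocal_estimate (ω : ℕ → ℝ) (β : ℕ → ℂ) (f : ℝ → ℂ) (C d : ℝ)
    (hωpos : ∀ j, 0 < ω j) (hωt : Tendsto ω atTop atTop)
    (hcount : ∀ R : ℝ, 1 ≤ R → (Nat.card {j : ℕ // ω j ≤ R} : ℝ) ≤ C * R ^ d)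
    (hf : ContDiff ℝ (⊤ : ℕ∞) f) (hsupp : HasCompactSupport f)
    (hβ : ∀ N : ℕ, Tendsto (fun j => ω j ^ N * ‖β j‖) atTop (nhds 0)) :
    ∀ N : ℕ, Tendsto (fun ζ : ℝ => ζ ^ N *
        ∑' j : ℕ, (1 / (2 * ω j)) *
          ‖(((Real.sqrt (1 + ‖β j‖ ^ 2) : ℝ) : ℂ) *
              (∫ x : ℝ, f x * Complex.exp (Complex.I * ((ω j + ζ : ℝ) : ℂ) * (x : ℂ))) +
            (starRingEnd ℂ) (β j) *
              (∫ x : ℝ, f x * Complex.exp (Complex.I * ((ζ - ω j : ℝ) : ℂ) * (x : ℂ))))‖ ^ 2)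
      atTop (nhds 0) := by
  intro N
  obtain ⟨m, hm, hmω⟩ := exists_pos_lb ω hωpos hωt
  set M : ℕ := N + ⌈d⌉₊ + 3 with hM
  have hMd : d + 2 ≤ (M : ℝ) := by
    have h1 := Nat.le_ceil d
    have h2 : (0:ℝ) ≤ (N : ℝ) := Nat.cast_nonneg N
    rw [hM]
    push_cast
    linarith
  have hMN : N + 1 ≤ M := by omega
  obtain ⟨D, hD, hDf⟩ := fourier_decay f hf hsupp M
  have hβ0 : Tendsto (fun j => ‖(β j)‖) atTop (nhds 0) := by simpa using hβ 0
  obtain ⟨B0, hB0nn, hB0⟩ := exists_bound _ hβ0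
  obtain ⟨B2, hB2nn, hB2⟩ := exists_bound _ (hβ (2 * M))
  have h1m : (0:ℝ) < 1 + 1 / m := by
    have h := one_div_pos.mpr hm
    linarith
  set c : ℝ := (1 + 1 / m) ^ (2 * M) with hc
  have hcnn : 0 ≤ c := le_of_lt (pow_pos h1m (2 * M))
  set K : ℝ := ((1 + B0 ^ 2) * D ^ 2 + (c * B2 * D) ^ 2) / m with hK
  have hKnn : 0 ≤ K := div_nonneg (by positivity) hm.le
  have hS : Summable fun j : ℕ => (1 / (1 + ω j)) ^ M :=
    summable_aux ω C d hωpos hωt hcount M hMd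
  set S := ∑' j : ℕ, (1 / (1 + ω j)) ^ M with hSdef
  have hSnn : 0 ≤ S :=
    tsum_nonneg fun j => pow_nonneg (one_div_nonneg.mpr (by linarith [hωpos j])) M
  have hterm_nonneg : ∀ (ζ : ℝ) (j : ℕ), 0 ≤ (1 / (2 * ω j)) *
      ‖(((Real.sqrt (1 + ‖(β j)‖ ^ 2) : ℝ) : ℂ) *
          (∫ x : ℝ, f x * Complex.exp (Complex.I * ((ω j + ζ : ℝ) : ℂ) * (x : ℂ))) +
        (starRingEnd ℂ) (β j) *
          (∫ x : ℝ, f x * Complex.exp (Complex.I * ((ζ - ω j : ℝ) : ℂ) * (x : ℂ))))‖ ^ 2 :=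
    fun ζ j => mul_nonneg (one_div_nonneg.mpr (by linarith [hωpos j]))
      (pow_nonneg (norm_nonneg _) 2)
  have hterm : ∀ ζ : ℝ, 1 ≤ ζ → ∀ j : ℕ,
      (1 / (2 * ω j)) *
          ‖(((Real.sqrt (1 + ‖(β j)‖ ^ 2) : ℝ) : ℂ) *
              (∫ x : ℝ, f x * Complex.exp (Complex.I * ((ω j + ζ : ℝ) : ℂ) * (x : ℂ))) +
            (starRingEnd ℂ) (β j) *
              (∫ x : ℝ, f x * Complex.exp (Complex.I * ((ζ - ω j : ℝ) : ℂ) * (x : ℂ))))‖ ^ 2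
        ≤ K * ((1 / (1 + ω j)) ^ M * (1 / (1 + ζ)) ^ M) := by
    intro ζ hζ j
    have hωj := hωpos j
    have hmj := hmω j
    set a := ‖(β j)‖ with ha
    have hann : 0 ≤ a := norm_nonneg _
    set e1 := ‖(∫ x : ℝ, f x *
      Complex.exp (Complex.I * ((ω j + ζ : ℝ) : ℂ) * (x : ℂ)))‖ with he1
    set e2 := ‖(∫ x : ℝ, f x *
      Complex.exp (Complex.I * ((ζ - ω j : ℝ) : ℂ) * (x : ℂ)))‖ with he2
    have he1nn : 0 ≤ e1 := norm_nonneg _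
    have he2nn : 0 ≤ e2 := norm_nonneg _
    have hu : (1:ℝ) ≤ 1 + ω j := by linarith
    have hv : (1:ℝ) ≤ 1 + ζ := by linarith
    set U : ℝ := (1 + ω j) ^ M * (1 + ζ) ^ M with hU
    have hUpos : 0 < U := mul_pos (pow_pos (by linarith) M) (pow_pos (by linarith) M)
    have hU1 : 1 ≤ U := by
      rw [hU]
      have h1 : (1:ℝ) ≤ (1 + ω j) ^ M := one_le_pow₀ hu
      have h2 : (1:ℝ) ≤ (1 + ζ) ^ M := one_le_pow₀ hv
      nlinarith
    have habs : ‖(((Real.sqrt (1 + a ^ 2) : ℝ) : ℂ) *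
          (∫ x : ℝ, f x * Complex.exp (Complex.I * ((ω j + ζ : ℝ) : ℂ) * (x : ℂ))) +
        (starRingEnd ℂ) (β j) *
          (∫ x : ℝ, f x * Complex.exp (Complex.I * ((ζ - ω j : ℝ) : ℂ) * (x : ℂ))))‖
        ≤ Real.sqrt (1 + a ^ 2) * e1 + a * e2 := by
      refine (norm_add_le _ _).trans ?_
      rw [norm_mul, norm_mul, Complex.norm_of_nonneg (Real.sqrt_nonneg _), Complex.norm_conj, ← ha]
    have hb1 : e1 ≤ D / (1 + (ω j + ζ)) ^ M := by
      have h := hDf (ω j + ζ)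
      rw [abs_of_pos (by linarith)] at h
      rw [he1]
      exact h
    have hb2 : e2 ≤ D / (1 + |ζ - ω j|) ^ M := hDf (ζ - ω j)
    have he1sq : e1 ^ 2 ≤ D ^ 2 / U := by
      have key1 : (1 + ω j) * (1 + ζ) ≤ (1 + (ω j + ζ)) ^ 2 := by nlinarith
      calc e1 ^ 2 ≤ (D / (1 + (ω j + ζ)) ^ M) ^ 2 := pow_le_pow_left₀ he1nn hb1 2
        _ = D ^ 2 / ((1 + (ω j + ζ)) ^ 2) ^ M := by
            rw [div_pow, ← pow_mul, mul_comm M 2, pow_mul]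
        _ ≤ D ^ 2 / (((1 + ω j) * (1 + ζ)) ^ M) :=
            div_le_div_of_nonneg_left (by positivity)
              (pow_pos (mul_pos (by linarith) (by linarith)) M)
              (pow_le_pow_left₀ (mul_nonneg (by linarith) (by linarith)) key1 M)
        _ = D ^ 2 / U := by rw [mul_pow, hU]
    have hωu : (1 + ω j) ≤ (1 + 1 / m) * ω j := by
      have h1 : (1:ℝ) ≤ 1 / m * ω j := by
        calc (1:ℝ) = 1 / m * m := by field_simp
          _ ≤ 1 / m * ω j := mul_le_mul_of_nonneg_left hmj (one_div_pos.mpr hm).le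
      calc 1 + ω j ≤ 1 / m * ω j + ω j := by linarith
        _ = (1 + 1 / m) * ω j := by ring
    have hβb : a * (1 + ω j) ^ (2 * M) ≤ c * B2 := by
      have hb := hB2 j
      rw [← ha] at hb
      calc a * (1 + ω j) ^ (2 * M) ≤ a * ((1 + 1 / m) * ω j) ^ (2 * M) :=
            mul_le_mul_of_nonneg_left (pow_le_pow_left₀ (by linarith) hωu _) hann
        _ = (1 + 1 / m) ^ (2 * M) * (ω j ^ (2 * M) * a) := by rw [mul_pow]; ring
        _ ≤ c * B2 := by
            rw [hc]
            exact mul_le_mul_of_nonneg_left hb (pow_pos h1m _).le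
    have hP : (1 + ζ) ≤ (1 + ω j) * (1 + |ζ - ω j|) := by
      nlinarith [abs_nonneg (ζ - ω j), le_abs_self (ζ - ω j)]
    have hae2 : a * e2 ≤ c * B2 * D / U := by
      have ha' : a ≤ c * B2 / (1 + ω j) ^ (2 * M) := by
        rw [le_div_iff₀ (pow_pos (by linarith) _)]
        exact hβb
      calc a * e2 ≤ (c * B2 / (1 + ω j) ^ (2 * M)) * (D / (1 + |ζ - ω j|) ^ M) :=
            mul_le_mul ha' hb2 he2nn
              (div_nonneg (mul_nonneg hcnn hB2nn) (pow_nonneg (by linarith) _))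
        _ = c * B2 * D / ((1 + ω j) ^ (2 * M) * (1 + |ζ - ω j|) ^ M) := by
            rw [div_mul_div_comm]
        _ ≤ c * B2 * D / U := by
            have hre : (1 + ω j) ^ (2 * M) * (1 + |ζ - ω j|) ^ M
                = (1 + ω j) ^ M * ((1 + ω j) * (1 + |ζ - ω j|)) ^ M := by
              rw [mul_pow, two_mul, pow_add]; ring
            rw [hre, hU]
            refine div_le_div_of_nonneg_left (mul_nonneg (mul_nonneg hcnn hB2nn) hD.le)
              hUpos ?_
            exact mul_le_mul_of_nonneg_left
              (pow_le_pow_left₀ (by linarith) hP M)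
              (pow_nonneg (by linarith) M)
    have haB : a ≤ B0 := by have hb := hB0 j; rwa [← ha] at hb
    have hsqrt_sq : Real.sqrt (1 + a ^ 2) ^ 2 = 1 + a ^ 2 := Real.sq_sqrt (by positivity)
    have hsq : (Real.sqrt (1 + a ^ 2) * e1 + a * e2) ^ 2
        ≤ 2 * ((1 + B0 ^ 2) * (D ^ 2 / U) + (c * B2 * D / U) ^ 2) := by
      have h1 : (Real.sqrt (1 + a ^ 2) * e1) ^ 2 ≤ (1 + B0 ^ 2) * (D ^ 2 / U) := by
        rw [mul_pow, hsqrt_sq]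
        have h12 : 1 + a ^ 2 ≤ 1 + B0 ^ 2 := by nlinarith
        exact mul_le_mul h12 he1sq (by positivity) (by positivity)
      have h2 : (a * e2) ^ 2 ≤ (c * B2 * D / U) ^ 2 :=
        pow_le_pow_left₀ (mul_nonneg hann he2nn) hae2 2
      nlinarith [sq_nonneg (Real.sqrt (1 + a ^ 2) * e1 - a * e2),
        mul_nonneg (Real.sqrt_nonneg (1 + a ^ 2)) he1nn, mul_nonneg hann he2nn]
    have hfrac : (1:ℝ) / (2 * ω j) ≤ 1 / (2 * m) :=
      one_div_le_one_div_of_le (by linarith) (by linarith)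
    have hr : (1 / (1 + ω j)) ^ M * (1 / (1 + ζ)) ^ M = 1 / U := by
      rw [div_pow, div_pow, one_pow, div_mul_div_comm, one_mul, hU]
    have h2' : (c * B2 * D / U) ^ 2 ≤ (c * B2 * D) ^ 2 / U := by
      rw [div_pow]
      refine div_le_div_of_nonneg_left (sq_nonneg _) hUpos ?_
      nlinarith
    calc (1 / (2 * ω j)) *
          ‖(((Real.sqrt (1 + a ^ 2) : ℝ) : ℂ) *
              (∫ x : ℝ, f x * Complex.exp (Complex.I * ((ω j + ζ : ℝ) : ℂ) * (x : ℂ))) +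
            (starRingEnd ℂ) (β j) *
              (∫ x : ℝ, f x * Complex.exp (Complex.I * ((ζ - ω j : ℝ) : ℂ) * (x : ℂ))))‖ ^ 2
        ≤ (1 / (2 * m)) * (Real.sqrt (1 + a ^ 2) * e1 + a * e2) ^ 2 := by
          apply mul_le_mul hfrac (pow_le_pow_left₀ (norm_nonneg _) habs 2)
            (pow_nonneg (norm_nonneg _) 2)
            (one_div_nonneg.mpr (by linarith))
      _ ≤ (1 / (2 * m)) * (2 * ((1 + B0 ^ 2) * (D ^ 2 / U) + (c * B2 * D) ^ 2 / U)) := by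
          apply mul_le_mul_of_nonneg_left _ (one_div_nonneg.mpr (by linarith))
          refine hsq.trans ?_
          linarith [h2']
      _ = K * (1 / U) := by
          rw [hK]
          field_simp
      _ = K * ((1 / (1 + ω j)) ^ M * (1 / (1 + ζ)) ^ M) := by rw [hr]
  have hbound_summable : ∀ ζ : ℝ,
      Summable fun j : ℕ => K * ((1 / (1 + ω j)) ^ M * (1 / (1 + ζ)) ^ M) := by
    intro ζ
    have h := (hS.mul_left K).mul_right ((1 / (1 + ζ)) ^ M)
    refine h.congr fun j => ?_
    ring
  have horig_summable : ∀ ζ : ℝ, 1 ≤ ζ → Summable fun j : ℕ => (1 / (2 * ω j)) *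
      ‖(((Real.sqrt (1 + ‖(β j)‖ ^ 2) : ℝ) : ℂ) *
          (∫ x : ℝ, f x * Complex.exp (Complex.I * ((ω j + ζ : ℝ) : ℂ) * (x : ℂ))) +
        (starRingEnd ℂ) (β j) *
          (∫ x : ℝ, f x * Complex.exp (Complex.I * ((ζ - ω j : ℝ) : ℂ) * (x : ℂ))))‖ ^ 2 :=
    fun ζ hζ => Summable.of_nonneg_of_le (hterm_nonneg ζ) (hterm ζ hζ) (hbound_summable ζ)
  have htsum : ∀ ζ : ℝ, 1 ≤ ζ → (∑' j : ℕ, (1 / (2 * ω j)) *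
      ‖(((Real.sqrt (1 + ‖(β j)‖ ^ 2) : ℝ) : ℂ) *
          (∫ x : ℝ, f x * Complex.exp (Complex.I * ((ω j + ζ : ℝ) : ℂ) * (x : ℂ))) +
        (starRingEnd ℂ) (β j) *
          (∫ x : ℝ, f x * Complex.exp (Complex.I * ((ζ - ω j : ℝ) : ℂ) * (x : ℂ))))‖ ^ 2)
      ≤ K * S * (1 / (1 + ζ)) ^ M := by
    intro ζ hζ
    calc _ ≤ ∑' j : ℕ, K * ((1 / (1 + ω j)) ^ M * (1 / (1 + ζ)) ^ M) :=
          Summable.tsum_le_tsum (hterm ζ hζ) (horig_summable ζ hζ) (hbound_summable ζ)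
      _ = K * S * (1 / (1 + ζ)) ^ M := by
          rw [hSdef, tsum_mul_left, tsum_mul_right]
          ring
  apply squeeze_zero' (g := fun ζ : ℝ => K * S / ζ)
  · filter_upwards [eventually_ge_atTop (0:ℝ)] with ζ hζ
    exact mul_nonneg (pow_nonneg hζ N) (tsum_nonneg fun j => hterm_nonneg ζ j)
  · filter_upwards [eventually_ge_atTop (1:ℝ)] with ζ hζ
    have hζ0 : (0:ℝ) < ζ := by linarith
    have e1 : (1:ℝ) / (1 + ζ) ≤ 1 / ζ := one_div_le_one_div_of_le hζ0 (by linarith)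
    have e2 : ((1:ℝ) / (1 + ζ)) ^ M ≤ (1 / ζ) ^ M :=
      pow_le_pow_left₀ (one_div_nonneg.mpr (by linarith)) e1 M
    have e3 : ((1:ℝ) / ζ) ^ M ≤ (1 / ζ) ^ (N + 1) := by
      apply pow_le_pow_of_le_one (one_div_nonneg.mpr hζ0.le) _ hMN
      rw [div_le_one hζ0]; exact hζ
    calc ζ ^ N * (∑' j : ℕ, (1 / (2 * ω j)) *
          ‖(((Real.sqrt (1 + ‖(β j)‖ ^ 2) : ℝ) : ℂ) *
              (∫ x : ℝ, f x * Complex.exp (Complex.I * ((ω j + ζ : ℝ) : ℂ) * (x : ℂ))) +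
            (starRingEnd ℂ) (β j) *
              (∫ x : ℝ, f x * Complex.exp (Complex.I * ((ζ - ω j : ℝ) : ℂ) * (x : ℂ))))‖ ^ 2)
        ≤ ζ ^ N * (K * S * (1 / (1 + ζ)) ^ M) :=
          mul_le_mul_of_nonneg_left (htsum ζ hζ) (pow_nonneg hζ0.le N)
      _ ≤ ζ ^ N * (K * S * (1 / ζ) ^ (N + 1)) := by
          apply mul_le_mul_of_nonneg_left _ (pow_nonneg hζ0.le N)
          exact mul_le_mul_of_nonneg_left (e2.trans e3) (mul_nonneg hKnn hSnn)
      _ = K * S / ζ := by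
          have hN : ζ ^ N ≠ 0 := pow_ne_zero N hζ0.ne'
          rw [one_div_pow, pow_succ]
          field_simp
  · exact tendsto_const_nhds.div_atTop tendsto_id
end

section
/- Let (ω_j) be positive reals with ω_j ≥ 1, (β_j) complex numbers with |β_j| polynomially bounded in ω_j, and α_j = √(1+|β_j|²). If the series ∑_j ω_j^{4k−2} |α_j conj(β_j)|² converges for every k ∈ ℕ, then ω_j^N β_j → 0 for every N ∈ ℕ. -/
open Filter

/-- Finite fluctuations force rapid decay: if `ω_j ≥ 1`, `ω_j → ∞`, `|β_j|` is
polynomially bounded in `ω_j`, `α_j = √(1 + |β_j|²)`, and for every `k` the series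
`∑_j ω_j^(4k-2) |α_j conj(β_j)|²` converges, then `ω_j^N β_j → 0` for every `N`. -/
theorem finite_fluctuations_imply_rapid_decay (ω : ℕ → ℝ) (β : ℕ → ℂ) (P : Polynomial ℝ)
    (hω : ∀ j, 1 ≤ ω j) (hωt : Tendsto ω atTop atTop)
    (hP : ∀ j, ‖β j‖ ≤ P.eval (ω j))
    (hsum : ∀ k : ℕ, Summable fun j =>
      ω j ^ ((4 * k : ℤ) - 2) *
        (Real.sqrt (1 + ‖β j‖ ^ 2) * ‖(starRingEnd ℂ) (β j)‖) ^ 2) :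
    ∀ N : ℕ, Tendsto (fun j => ((ω j : ℂ)) ^ N * β j) atTop (nhds 0) := by
  intro N
  -- the summand tends to zero
  have hterm := (hsum (N + 1)).tendsto_atTop_zero
  -- squeeze: (ω^N |β|)² ≤ summand
  have hsq : Tendsto (fun j => (ω j ^ N * ‖β j‖) ^ 2) atTop (nhds 0) := by
    refine tendsto_of_tendsto_of_tendsto_of_le_of_le tendsto_const_nhds hterm
      (fun j => by positivity) (fun j => ?_)
    have h1 : (1 : ℝ) ≤ ω j := hω j
    have hb : (0 : ℝ) ≤ ‖β j‖ := norm_nonneg _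
    have hzp : ω j ^ ((4 * ((N + 1 : ℕ) : ℤ)) - 2) = ω j ^ (4 * N + 2) := by
      have : ((4 * ((N + 1 : ℕ) : ℤ)) - 2) = ((4 * N + 2 : ℕ) : ℤ) := by push_cast; ring
      rw [this, zpow_natCast]
    rw [hzp, Complex.norm_conj]
    have hα : (1 : ℝ) ≤ Real.sqrt (1 + ‖β j‖ ^ 2) := by
      have := Real.sqrt_le_sqrt (show (1:ℝ) ≤ 1 + ‖β j‖ ^ 2 by nlinarith [sq_nonneg (‖β j‖)])
      simpa using this
    calc (ω j ^ N * ‖β j‖) ^ 2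
        = ω j ^ (2 * N) * ‖β j‖ ^ 2 := by ring
      _ ≤ ω j ^ (4 * N + 2) * ‖β j‖ ^ 2 := by
          have := pow_le_pow_right₀ h1 (show 2 * N ≤ 4 * N + 2 by omega)
          exact mul_le_mul_of_nonneg_right this (by positivity)
      _ ≤ ω j ^ (4 * N + 2) *
            (Real.sqrt (1 + ‖β j‖ ^ 2) * ‖β j‖) ^ 2 := by
          apply mul_le_mul_of_nonneg_left _ (by positivity)
          calc ‖β j‖ ^ 2 = (1 * ‖β j‖) ^ 2 := by ring
            _ ≤ (Real.sqrt (1 + ‖β j‖ ^ 2) * ‖β j‖) ^ 2 :=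
                pow_le_pow_left₀ (by positivity) (mul_le_mul_of_nonneg_right hα hb) 2
  -- hence ω^N |β| → 0
  have habs : Tendsto (fun j => ω j ^ N * ‖β j‖) atTop (nhds 0) := by
    have hc : Tendsto (fun j => Real.sqrt ((ω j ^ N * ‖β j‖) ^ 2)) atTop
        (nhds 0) := by
      have := (Real.continuous_sqrt.tendsto 0).comp hsq
      simpa [Function.comp_def] using this
    refine hc.congr fun j => ?_
    exact Real.sqrt_sq (mul_nonneg (pow_nonneg (le_trans zero_le_one (hω j)) N)
      (norm_nonneg _))
  -- conclude for the complex sequence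
  rw [tendsto_zero_iff_norm_tendsto_zero]
  refine habs.congr fun j => ?_
  have h0 : (0 : ℝ) ≤ ω j := le_trans zero_le_one (hω j)
  simp [norm_mul, norm_pow, Complex.norm_real, Real.norm_eq_abs, abs_of_nonneg h0]
end
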